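/- Let $p$ be an odd prime and $R = \mathbb{Z}[q^{\pm 1}]$. Suppose $f \in R$ is supported entirely on even exponents or entirely on odd exponents. If $f$ lies in the ideal $(p, q^{p} - 1)$ generated by $p$ and $q^{p} - 1$, then $f$ lies in the ideal $(p, q^{p} + 1)$ generated by $p$ and $q^{p} + 1$. -/

import Mathlib

open LaurentPolynomial

/-! The substitution `q ↦ -q` is a ring endomorphism of `R[q^{±1}]` which, for odd `n`, carries
`(m, q^n - 1)` into `(m, q^n + 1)`. On a Laurent polynomial supported on even (resp. odd) exponents
it acts as `1` (resp. `-1`), so such an `f` lies in the second ideal as soon as it lies in the first. -/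

namespace LaurentPolynomial

variable {R : Type*} [CommRing R]

lemma val_isUnit_T_one_unit_zpow (n : ℤ) :
    (((isUnit_T 1).unit ^ n : R[T;T⁻¹]ˣ) : R[T;T⁻¹]) = T n := by
  induction n using Int.induction_on with
  | zero => simp [T_zero]
  | succ n ih => rw [zpow_add_one, Units.val_mul, ih, IsUnit.unit_spec, T_add]
  | pred n ih =>
    rw [zpow_sub_one, Units.val_mul, ih, T_sub, Units.inv_eq_of_mul_eq_one_right]
    rw [IsUnit.unit_spec, ← T_add, add_neg_cancel, T_zero]

noncomputable def evalNegT : R[T;T⁻¹] →+* R[T;T⁻¹] :=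
  eval₂ C (-(isUnit_T (R := R) 1).unit)

lemma evalNegT_T_of_even {n : ℤ} (hn : Even n) : evalNegT (T n : R[T;T⁻¹]) = T n := by
  rw [evalNegT, eval₂_T, hn.neg_zpow, val_isUnit_T_one_unit_zpow]

lemma evalNegT_T_of_odd {n : ℤ} (hn : Odd n) : evalNegT (T n : R[T;T⁻¹]) = -T n := by
  rw [evalNegT, eval₂_T, hn.neg_zpow, Units.val_neg, val_isUnit_T_one_unit_zpow]

lemma evalNegT_eq_sum (f : R[T;T⁻¹]) :
    evalNegT f = ∑ i ∈ f.coeff.support, C (f.coeff i) * evalNegT (T i) := by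
  conv_lhs => rw [← f.sum_coeff_single]
  simp only [Finsupp.sum, map_sum, single_eq_C_mul_T, map_mul, evalNegT, eval₂_C]

lemma evalNegT_of_forall_even {f : R[T;T⁻¹]} (hf : ∀ i ∈ f.coeff.support, Even i) :
    evalNegT f = f := by
  rw [evalNegT_eq_sum]
  conv_rhs => rw [← f.sum_coeff_single]
  refine Finset.sum_congr rfl fun i hi => ?_
  rw [evalNegT_T_of_even (hf i hi), single_eq_C_mul_T]

lemma evalNegT_of_forall_odd {f : R[T;T⁻¹]} (hf : ∀ i ∈ f.coeff.support, Odd i) :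
    evalNegT f = -f := by
  rw [evalNegT_eq_sum]
  conv_rhs => rw [← f.sum_coeff_single, Finsupp.sum, ← Finset.sum_neg_distrib]
  refine Finset.sum_congr rfl fun i hi => ?_
  rw [evalNegT_T_of_odd (hf i hi), single_eq_C_mul_T, mul_neg]

lemma evalNegT_mem_span_T_add_one {m : ℕ} {n : ℤ} (hn : Odd n) {f : R[T;T⁻¹]}
    (hf : f ∈ Ideal.span {(m : R[T;T⁻¹]), T n - 1}) :
    evalNegT f ∈ Ideal.span {(m : R[T;T⁻¹]), T n + 1} := by
  obtain ⟨a, b, rfl⟩ := Ideal.mem_span_pair.1 hf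
  refine Ideal.mem_span_pair.2 ⟨evalNegT a, -evalNegT b, ?_⟩
  rw [map_add, map_mul, map_mul, map_natCast, map_sub, map_one, evalNegT_T_of_odd hn]
  ring

end LaurentPolynomial

theorem stmt_3_general (p : ℕ) (hodd : Odd p)
    (f : ℤ[T;T⁻¹])
    (hf : (∀ i ∈ f.coeff.support, Even i) ∨ (∀ i ∈ f.coeff.support, Odd i))
    (hmem : f ∈ Ideal.span {(p : ℤ[T;T⁻¹]), T (p : ℤ) - 1}) :
    f ∈ Ideal.span {(p : ℤ[T;T⁻¹]), T (p : ℤ) + 1} := by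
  have hσ := evalNegT_mem_span_T_add_one ((Int.odd_coe_nat p).2 hodd) hmem
  rcases hf with heven | hoddSupp
  · rwa [evalNegT_of_forall_even heven] at hσ
  · rw [evalNegT_of_forall_odd hoddSupp] at hσ
    simpa using neg_mem hσ

/-- Let `p` be an odd prime. If `f ∈ ℤ[q^{±1}]` is supported entirely on even exponents
or entirely on odd exponents, and `f ∈ (p, q^p - 1)`, then `f ∈ (p, q^p + 1)`. -/
theorem stmt_3 (p : ℕ) (hp : p.Prime) (hodd : Odd p)
    (f : ℤ[T;T⁻¹])
    (hf : (∀ i ∈ f.coeff.support, Even i) ∨ (∀ i ∈ f.coeff.support, Odd i))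
    (hmem : f ∈ Ideal.span {(p : ℤ[T;T⁻¹]), T (p : ℤ) - 1}) :
    f ∈ Ideal.span {(p : ℤ[T;T⁻¹]), T (p : ℤ) + 1} :=
  stmt_3_general p hodd f hf hmem
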